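/- arXiv:math/0601686 — 4 statements merged into one kernel-verified Lean document; each statement's English description precedes it below -/
import Mathlib

section
/- Let k be a number field with ring of integers R, and let A_1 and A_2 be R-orders of the number fields L_1 and L_2 respectively (with some fixed embeddings into an algebraic closure of k). Let L_3 = L_1·L_2 and A_3 = A_1·A_2, and let A_1', A_2', A_3' denote the integral closures of A_1, A_2, A_3 in L_1, L_2, L_3 respectively. Let α ∈ A_2' be an element with k(α) = L_2, so that L_1(α) = L_3. Then the product of conductors satisfies 𝒞_{A_1}·𝒞_{A_2}·𝒞_{A_1'[α]} ⊆ 𝒞_{A_3}, where 𝒞_{A_1'[α]} = {x ∈ A_3' : x·A_3' ⊆ A_1'[α]} is the conductor of the subring A_1'[α] of A_3'. -/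
open NumberField IntermediateField

noncomputable section

/-- The image of the ring of integers `R = 𝓞 k` of `k` inside a `k`-algebra `L`. -/
def intImage (k : Type*) (L : Type*) [Field k] [NumberField k] [Field L] [Algebra k L] :
    Subring L :=
  ((algebraMap k L).comp (algebraMap (𝓞 k) k)).range

/-- `A` is an `R`-order of `L`, where `R = 𝓞 k`: a subring of `L` containing (the image of) `R`,
finitely generated as an `R`-module, and whose fraction field is `L`. -/
def IsOrder (k : Type*) {L : Type*} [Field k] [NumberField k] [Field L] [Algebra k L]
    (A : Subring L) : Prop :=
  intImage k L ≤ A ∧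
  (∃ s : Finset L, (s : Set L) ⊆ A ∧
    ∀ a ∈ A, a ∈ Submodule.span (intImage k L) (s : Set L)) ∧
  (∀ x : L, ∃ a ∈ A, ∃ b ∈ A, b ≠ 0 ∧ x = a / b)

/-- The Dedekind complementary module `W_{A/R} = {b ∈ L ∣ Tr_{L/k}(bA) ⊆ R}`. -/
def complementaryModule (k : Type*) {L : Type*} [Field k] [Field L] [Algebra k L]
    (A : Subring L) : Set L :=
  {b : L | ∀ a ∈ A, IsIntegral ℤ (Algebra.trace k L (b * a))}

/-- For a subset `S ⊆ L`, the "inverse" `S⁻¹ = {x ∈ L ∣ xS ⊆ A}`. -/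
def invSet {L : Type*} [Field L] (A : Subring L) (S : Set L) : Set L :=
  {x : L | ∀ s ∈ S, x * s ∈ A}

/-- The Dedekind different `𝒟_{A/R} = W_{A/R}⁻¹`, as a set. -/
def dedekindDifferent (k : Type*) {L : Type*} [Field k] [Field L] [Algebra k L]
    (A : Subring L) : Set L :=
  invSet A (complementaryModule k A)

/-- The Dedekind different as an additive subgroup of `L`. -/
def dedekindDifferentAdd (k : Type*) {L : Type*} [Field k] [Field L] [Algebra k L]
    (A : Subring L) : AddSubgroup L where
  carrier := dedekindDifferent k A
  add_mem' := by
    intro a b ha hb w hw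
    rw [add_mul]
    exact A.add_mem (ha w hw) (hb w hw)
  zero_mem' := by
    intro w hw
    rw [zero_mul]
    exact A.zero_mem
  neg_mem' := by
    intro a ha w hw
    rw [neg_mul]
    exact A.neg_mem (ha w hw)

/-- A subset `S ⊆ L` is an invertible (fractional) ideal of `A` if `S · S⁻¹ = A`,
where the product is the additive group generated by the pairwise products. -/
def IsInvertibleIdeal {L : Type*} [Field L] (A : Subring L) (S : Set L) : Prop :=
  AddSubgroup.closure {x : L | ∃ d ∈ S, ∃ e ∈ invSet A S, x = d * e} = A.toAddSubgroup

/-- The index `[A : 𝒟_{A/R}]` of the Dedekind different in `A`. -/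
def differentIndex (k : Type*) {L : Type*} [Field k] [Field L] [Algebra k L]
    (A : Subring L) : ℕ :=
  (dedekindDifferentAdd k A).relIndex A.toAddSubgroup

/-- The conductor of a subring `B` of `L` relative to a subring `B'` of `L`:
`{x ∈ B' ∣ x·B' ⊆ B}`. -/
def conductorSet {L : Type*} [Field L] (B' : Subring L) (B : Subring L) : Set L :=
  {x : L | x ∈ B' ∧ ∀ y ∈ B', x * y ∈ B}

set_option synthInstance.maxHeartbeats 1000000

/-- Let `k` be a number field with ring of integers `R`, and let `A₁`, `A₂` be
`R`-orders of the number fields `L₁`, `L₂` (inside a fixed algebraic closure `K` of `k`).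
Let `L₃ = L₁·L₂`, `A₃ = A₁·A₂`, and let `A₁'`, `A₂'`, `A₃'` be the integral closures of
`A₁`, `A₂`, `A₃` in `L₁`, `L₂`, `L₃` (the rings of integers).  Let `α ∈ A₂'` with `k(α) = L₂`
(so `L₁(α) = L₃`).  Then `𝒞_{A₁} · 𝒞_{A₂} · 𝒞_{A₁'[α]} ⊆ 𝒞_{A₃}`, where `𝒞_{A₁'[α]}` is the
conductor of the subring `A₁'[α]` of `A₃'`. -/
theorem conductor_mul_conductor_mul_conductor_subset
    (k K : Type*) [Field k] [NumberField k] [Field K] [Algebra k K] [IsAlgClosure k K]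
    (L₁ L₂ : IntermediateField k K) [FiniteDimensional k L₁] [FiniteDimensional k L₂]
    (A₁ : Subring L₁) (A₂ : Subring L₂)
    (hA₁ : IsOrder k A₁) (hA₂ : IsOrder k A₂)
    (A₃ : Subring ↥(L₁ ⊔ L₂))
    (hA₃ : A₃ =
      (A₁.map (inclusion (le_sup_left : L₁ ≤ L₁ ⊔ L₂)).toRingHom) ⊔
      (A₂.map (inclusion (le_sup_right : L₂ ≤ L₁ ⊔ L₂)).toRingHom))
    (α : K) (hαL₂ : α ∈ L₂) (hαint : IsIntegral ℤ α)
    (hαgen : IntermediateField.adjoin k {α} = L₂)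
    -- `A₁'[α]`, the subring of `L₃` generated by the integral closure `A₁'` of `A₁` in `L₁`
    -- together with `α`
    (B : Subring ↥(L₁ ⊔ L₂))
    (hB : B = Subring.closure
      (((integralClosure ℤ L₁).toSubring.map
          (inclusion (le_sup_left : L₁ ≤ L₁ ⊔ L₂)).toRingHom : Set ↥(L₁ ⊔ L₂)) ∪
        {⟨α, (le_sup_right : L₂ ≤ L₁ ⊔ L₂) hαL₂⟩}))
    (c₁ : ↥L₁) (hc₁ : c₁ ∈ conductorSet (integralClosure ℤ L₁).toSubring A₁)
    (c₂ : ↥L₂) (hc₂ : c₂ ∈ conductorSet (integralClosure ℤ L₂).toSubring A₂)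
    (c₃ : ↥(L₁ ⊔ L₂))
    (hc₃ : c₃ ∈ conductorSet (integralClosure ℤ ↥(L₁ ⊔ L₂)).toSubring B) :
    (inclusion (le_sup_left : L₁ ≤ L₁ ⊔ L₂) c₁) *
      (inclusion (le_sup_right : L₂ ≤ L₁ ⊔ L₂) c₂) * c₃ ∈
      conductorSet (integralClosure ℤ ↥(L₁ ⊔ L₂)).toSubring A₃ := by
  obtain ⟨hc₁I, hc₁C⟩ := hc₁
  obtain ⟨hc₂I, hc₂C⟩ := hc₂
  obtain ⟨hc₃I, hc₃C⟩ := hc₃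
  set ι₁ := (inclusion (le_sup_left : L₁ ≤ L₁ ⊔ L₂)) with hι₁
  set ι₂ := (inclusion (le_sup_right : L₂ ≤ L₁ ⊔ L₂)) with hι₂
  set β : ↥L₂ := ⟨α, hαL₂⟩ with hβ
  set α' : ↥(L₁ ⊔ L₂) := ⟨α, (le_sup_right : L₂ ≤ L₁ ⊔ L₂) hαL₂⟩ with hα'
  have hι₂β : ι₂ β = α' := rfl
  have hβint : IsIntegral ℤ β := by
    have : algebraMap ↥L₂ K β = α := rfl
    rw [← isIntegral_algebraMap_iff (algebraMap ↥L₂ K).injective, this]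
    exact hαint
  set S₁ : Subring ↥(L₁ ⊔ L₂) :=
    (integralClosure ℤ L₁).toSubring.map ι₁.toRingHom with hS₁
  -- B is contained in the S₁-subalgebra generated by α'
  have hBle : B ≤ (Algebra.adjoin ↥S₁ {α'}).toSubring := by
    rw [hB]
    apply Subring.closure_le.mpr
    rintro x (hx | hx)
    · exact (Algebra.adjoin ↥S₁ {α'}).algebraMap_mem ⟨x, hx⟩
    · rw [Set.mem_singleton_iff] at hx
      subst hx
      exact Algebra.subset_adjoin rfl
  -- key: multiplying any element of B by c₁c₂ lands in A₃
  have key : ∀ b ∈ B, (ι₁ c₁ : ↥(L₁ ⊔ L₂)) * (ι₂ c₂) * b ∈ A₃ := by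
    intro b hb
    have hb' := hBle hb
    rw [Subalgebra.mem_toSubring, Algebra.adjoin_singleton_eq_range_aeval,
      AlgHom.mem_range] at hb'
    obtain ⟨p, hp⟩ := hb'
    rw [Polynomial.aeval_eq_sum_range] at hp
    subst hp
    rw [Finset.mul_sum]
    apply Subring.sum_mem
    intro i _
    have hsmul : (p.coeff i) • α' ^ i = ((p.coeff i : ↥(L₁ ⊔ L₂))) * α' ^ i := rfl
    obtain ⟨a₀, ha₀, ha₀eq⟩ := (p.coeff i).2
    have hrearr : (ι₁ c₁ : ↥(L₁ ⊔ L₂)) * (ι₂ c₂) * ((p.coeff i) • α' ^ i)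
        = (ι₁ (c₁ * a₀)) * (ι₂ (c₂ * β ^ i)) := by
      rw [hsmul, ← ha₀eq, map_mul, map_mul, map_pow, hι₂β]
      show ι₁ c₁ * ι₂ c₂ * (ι₁ a₀ * α' ^ i) = ι₁ (c₁ * a₀) * ι₂ (c₂ * β ^ i)
      rw [map_mul, map_mul, map_pow, hι₂β]
      ring
    rw [hrearr, hA₃]
    exact Subring.mul_mem _
      ((le_sup_left : A₁.map ι₁.toRingHom ≤ _) ⟨c₁ * a₀, hc₁C a₀ ha₀, rfl⟩)
      ((le_sup_right : A₂.map ι₂.toRingHom ≤ _) ⟨c₂ * β ^ i, hc₂C (β ^ i) (Subring.pow_mem _ hβint i), rfl⟩)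
  constructor
  · exact ((hc₁I.map ι₁.toRingHom.toIntAlgHom).mul (hc₂I.map ι₂.toRingHom.toIntAlgHom)).mul hc₃I
  · intro y hy
    have hby : c₃ * y ∈ B := hc₃C y hy
    have : (ι₁ c₁ : ↥(L₁ ⊔ L₂)) * (ι₂ c₂) * c₃ * y = (ι₁ c₁) * (ι₂ c₂) * (c₃ * y) := by ring
    rw [this]
    exact key _ hby


end
end

section
/- Let k be a number field with ring of integers R, let A be an R-order of a number field L ⊇ k, and let A' be the integral closure of A in L. If 𝔞 is an invertible integral ideal of A (i.e. 𝔞 ⊆ A and 𝔞·𝔞⁻¹ = A), then the index of 𝔞 in A equals the index of the extended ideal 𝔞A' in A': [A : 𝔞] = [A' : 𝔞A']. -/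
open NumberField IntermediateField

noncomputable section

open Submodule Pointwise

section AuxLemmas

variable {L : Type*} [Field L]

lemma mulRight_map' (M : Submodule ℤ L) (z : L) :
    M * span ℤ {z} = M.map (LinearMap.mulRight ℤ z) := by
  ext x
  rw [Submodule.mem_mul_span_singleton]
  simp [Submodule.mem_map]

lemma relIndex_eq_of_mul' (U V W X : Submodule ℤ L) (z : L)
    (hUz : ∀ u ∈ U, u * z ∈ W)
    (hVz : ∀ v ∈ V, v * z ∈ X)
    (hker : ∀ u ∈ U, u * z ∈ X → u ∈ V)
    (hsurj : ∀ w ∈ W, ∃ x ∈ X, ∃ u ∈ U, w = x + u * z) :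
    X.toAddSubgroup.relIndex W.toAddSubgroup
      = V.toAddSubgroup.relIndex U.toAddSubgroup := by
  classical
  set Hu : AddSubgroup ↥U.toAddSubgroup :=
    V.toAddSubgroup.addSubgroupOf U.toAddSubgroup with hHu
  set Hw : AddSubgroup ↥W.toAddSubgroup :=
    X.toAddSubgroup.addSubgroupOf W.toAddSubgroup with hHw
  have hf : ∀ u : ↥U.toAddSubgroup, (u : L) * z ∈ W.toAddSubgroup := fun u => hUz u u.2
  let f : ↥U.toAddSubgroup →+ ↥W.toAddSubgroup :=
    AddMonoidHom.mk' (fun u => ⟨(u : L) * z, hf u⟩) (by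
      intro u v
      ext
      simp [add_mul])
  have hcond : Hu ≤ Hw.comap f := by
    intro u hu
    rw [hHu, AddSubgroup.mem_addSubgroupOf] at hu
    rw [AddSubgroup.mem_comap, hHw, AddSubgroup.mem_addSubgroupOf]
    exact hVz u hu
  let F := QuotientAddGroup.map Hu Hw f hcond
  have hbij : Function.Bijective F := by
    constructor
    · rw [injective_iff_map_eq_zero]
      intro q hq
      induction q using QuotientAddGroup.induction_on with
      | H u =>
        have he : F ((u : ↥U.toAddSubgroup ⧸ Hu)) = ((f u : ↥W.toAddSubgroup) : ↥W.toAddSubgroup ⧸ Hw) := rfl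
        rw [he, QuotientAddGroup.eq_zero_iff] at hq
        rw [hHw, AddSubgroup.mem_addSubgroupOf] at hq
        have hv : (u : L) ∈ V := hker u u.2 hq
        rw [QuotientAddGroup.eq_zero_iff, hHu, AddSubgroup.mem_addSubgroupOf]
        exact hv
    · intro qw
      induction qw using QuotientAddGroup.induction_on with
      | H w =>
        obtain ⟨x, hx, u, hu, hwe⟩ := hsurj w w.2
        refine ⟨QuotientAddGroup.mk (⟨u, hu⟩ : ↥U.toAddSubgroup), ?_⟩
        have he : F (QuotientAddGroup.mk (⟨u, hu⟩ : ↥U.toAddSubgroup))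
            = QuotientAddGroup.mk (f ⟨u, hu⟩) := rfl
        rw [he, QuotientAddGroup.eq]
        rw [hHw, AddSubgroup.mem_addSubgroupOf]
        have hco : ((-(f ⟨u, hu⟩) + w : ↥W.toAddSubgroup) : L) = x := by
          show -((⟨u, hu⟩ : ↥U.toAddSubgroup) * z) + (w : L) = x
          rw [hwe]
          push_cast
          ring
        rw [hco]
        exact hx
  have h1 : X.toAddSubgroup.relIndex W.toAddSubgroup = Nat.card (↥W.toAddSubgroup ⧸ Hw) := by
    rw [AddSubgroup.relIndex, AddSubgroup.index_eq_card]
  have h2 : V.toAddSubgroup.relIndex U.toAddSubgroup = Nat.card (↥U.toAddSubgroup ⧸ Hu) := by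
    rw [AddSubgroup.relIndex, AddSubgroup.index_eq_card]
  rw [h1, h2]
  exact (Nat.card_congr (AddEquiv.ofBijective F hbij).toEquiv).symm

lemma main_lemma (𝔞 𝔟 𝒜 : Submodule ℤ L)
    (h1 : (1:L) ∈ 𝒜) (h𝒜 : 𝒜 * 𝒜 ≤ 𝒜) (hab : 𝔞 * 𝔟 = 𝒜) (ha : 𝒜 * 𝔞 ≤ 𝔞) :
    ∀ n : ℕ, n ≠ 0 → ∀ M N : Submodule ℤ L, 𝒜 * M ≤ M → 𝒜 * N ≤ N → M ≤ N →
      M.toAddSubgroup.relIndex N.toAddSubgroup = n →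
      (𝔞 * M).toAddSubgroup.relIndex (𝔞 * N).toAddSubgroup = n := by
  intro n
  induction n using Nat.strong_induction_on with
  | _ n IH =>
  intro hn M N hAM hAN hMN hrel
  by_cases hMN' : M = N
  · subst hMN'
    rw [AddSubgroup.relIndex_self] at hrel ⊢
    exact hrel
  by_cases hsimple : ∃ Q : Submodule ℤ L, 𝒜 * Q ≤ Q ∧ M ≤ Q ∧ Q ≤ N ∧ Q ≠ M ∧ Q ≠ N
  · obtain ⟨Q, hAQ, hMQ, hQN, hQM, hQN'⟩ := hsimple
    set r1 := M.toAddSubgroup.relIndex Q.toAddSubgroup with hr1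
    set r2 := Q.toAddSubgroup.relIndex N.toAddSubgroup with hr2
    have hMQ' : M.toAddSubgroup ≤ Q.toAddSubgroup := hMQ
    have hQN'' : Q.toAddSubgroup ≤ N.toAddSubgroup := hQN
    have hmul : r1 * r2 = n := by
      rw [hr1, hr2, AddSubgroup.relIndex_mul_relIndex _ _ _ hMQ' hQN'']
      exact hrel
    have hr1ne : r1 ≠ 1 := by
      intro h
      rw [hr1, AddSubgroup.relIndex_eq_one] at h
      exact hQM (le_antisymm (fun x hx => h hx) hMQ)
    have hr2ne : r2 ≠ 1 := by
      intro h
      rw [hr2, AddSubgroup.relIndex_eq_one] at h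
      exact hQN' (le_antisymm hQN (fun x hx => h hx))
    have hr1pos : r1 ≠ 0 := fun h => hn (by rw [← hmul, h, zero_mul])
    have hr2pos : r2 ≠ 0 := fun h => hn (by rw [← hmul, h, mul_zero])
    have hr1lt : r1 < n := by
      rw [← hmul]
      exact lt_mul_iff_one_lt_right (Nat.pos_of_ne_zero hr1pos) |>.mpr
        (lt_of_le_of_ne (Nat.one_le_iff_ne_zero.mpr hr2pos) (Ne.symm hr2ne))
    have hr2lt : r2 < n := by
      rw [← hmul]
      exact lt_mul_iff_one_lt_left (Nat.pos_of_ne_zero hr2pos) |>.mpr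
        (lt_of_le_of_ne (Nat.one_le_iff_ne_zero.mpr hr1pos) (Ne.symm hr1ne))
    have e1 := IH r1 hr1lt hr1pos M Q hAM hAQ hMQ rfl
    have e2 := IH r2 hr2lt hr2pos Q N hAQ hAN hQN rfl
    have h1' : (𝔞 * M).toAddSubgroup ≤ (𝔞 * Q).toAddSubgroup :=
      (mul_le_mul' le_rfl hMQ : 𝔞 * M ≤ 𝔞 * Q)
    have h2' : (𝔞 * Q).toAddSubgroup ≤ (𝔞 * N).toAddSubgroup :=
      (mul_le_mul' le_rfl hQN : 𝔞 * Q ≤ 𝔞 * N)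
    rw [← hmul, ← e1, ← e2]
    exact (AddSubgroup.relIndex_mul_relIndex _ _ _ h1' h2').symm
  · -- simple case
    obtain ⟨n₀, hn₀N, hn₀M⟩ := SetLike.exists_of_lt (lt_of_le_of_ne hMN hMN')
    push_neg at hsimple
    set 𝔪 : Submodule ℤ L := 𝒜 ⊓ Submodule.comap (LinearMap.mulRight ℤ n₀) M with h𝔪
    have hm_mem : ∀ x : L, x ∈ 𝔪 ↔ x ∈ 𝒜 ∧ x * n₀ ∈ M := by
      intro x
      rw [h𝔪, Submodule.mem_inf, Submodule.mem_comap, LinearMap.mulRight_apply]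
    have h1nm : (1:L) ∉ 𝔪 := by
      rw [hm_mem]
      rintro ⟨-, h⟩
      rw [one_mul] at h
      exact hn₀M h
    have hm_le : 𝔪 ≤ 𝒜 := inf_le_left
    have hm_ideal : ∀ c ∈ 𝒜, ∀ x ∈ 𝔪, c * x ∈ 𝔪 := by
      intro c hc x hx
      rw [hm_mem] at hx ⊢
      refine ⟨h𝒜 (mul_mem_mul hc hx.1), ?_⟩
      rw [mul_assoc]
      exact hAM (mul_mem_mul hc hx.2)
    -- every y ∈ N \ M generates
    have hQgen : ∀ y ∈ N, y ∉ M → M ⊔ 𝒜 * span ℤ {y} = N := by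
      intro y hyN hyM
      have hspan : span ℤ {y} ≤ N := by
        rw [span_le, Set.singleton_subset_iff]; exact hyN
      have hAQ : 𝒜 * (M ⊔ 𝒜 * span ℤ {y}) ≤ M ⊔ 𝒜 * span ℤ {y} := by
        rw [Submodule.mul_sup]
        apply sup_le_sup hAM
        rw [← mul_assoc]
        exact mul_le_mul' h𝒜 le_rfl
      have hQN : M ⊔ 𝒜 * span ℤ {y} ≤ N :=
        sup_le hMN (le_trans (mul_le_mul' le_rfl hspan) hAN)
      have hyQ : y ∈ M ⊔ 𝒜 * span ℤ {y} := by
        apply Submodule.mem_sup_right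
        have h1y : (1:L) * y ∈ 𝒜 * span ℤ {y} :=
          mul_mem_mul h1 (Submodule.mem_span_singleton_self y)
        rwa [one_mul] at h1y
      have := hsimple (M ⊔ 𝒜 * span ℤ {y}) hAQ le_sup_left hQN
      rcases (em (M ⊔ 𝒜 * span ℤ {y} = M)) with h | h
      · exact absurd (h ▸ hyQ) hyM
      · exact this h
    have hNgen : M ⊔ 𝒜 * span ℤ {n₀} = N := hQgen n₀ hn₀N hn₀M
    have hmax : ∀ s ∈ 𝒜, s ∉ 𝔪 → ∃ t ∈ 𝒜, 1 - t * s ∈ 𝔪 := by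
      intro s hs hsm
      have hsn : s * n₀ ∈ N := hAN (mul_mem_mul hs hn₀N)
      have hsnM : s * n₀ ∉ M := fun h => hsm ((hm_mem s).mpr ⟨hs, h⟩)
      have hgen := hQgen (s * n₀) hsn hsnM
      have hn₀' : n₀ ∈ M ⊔ 𝒜 * span ℤ {s * n₀} := hgen ▸ hn₀N
      rw [Submodule.mem_sup] at hn₀'
      obtain ⟨m, hm, w, hw, he⟩ := hn₀'
      rw [mulRight_map', Submodule.mem_map] at hw
      obtain ⟨t, ht, rfl⟩ := hw
      rw [LinearMap.mulRight_apply] at he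
      refine ⟨t, ht, ?_⟩
      rw [hm_mem]
      constructor
      · exact sub_mem h1 (h𝒜 (mul_mem_mul ht hs))
      · have hms : (1 - t * s) * n₀ = m := by linear_combination -he
        rw [hms]
        exact hm
    -- get a, b
    have h1ab : (1:L) ∈ 𝔞 * 𝔟 := by rw [hab]; exact h1
    have hwit : ∃ a ∈ 𝔞, ∃ b ∈ 𝔟, a * b ∉ 𝔪 := by
      have key : ∀ x : L, x ∈ 𝔞 * 𝔟 → (x ∈ 𝔪 ∨ ∃ a ∈ 𝔞, ∃ b ∈ 𝔟, a * b ∉ 𝔪) := by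
        intro x hx
        refine Submodule.mul_induction_on hx (fun p hp q hq => ?_) (fun u v hu hv => ?_)
        · by_cases h : p * q ∈ 𝔪
          · exact Or.inl h
          · exact Or.inr ⟨p, hp, q, hq, h⟩
        · rcases hu with hu | hu
          · rcases hv with hv | hv
            · exact Or.inl (add_mem hu hv)
            · exact Or.inr hv
          · exact Or.inr hu
      rcases key 1 h1ab with h | h
      · exact absurd h h1nm
      · exact h
    obtain ⟨a, ha𝔞, b, hb𝔟, hs𝔪⟩ := hwit
    have hb : ∀ x ∈ 𝔞, b * x ∈ 𝒜 := by
      intro x hx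
      rw [mul_comm, ← hab]
      exact mul_mem_mul hx hb𝔟
    have hs𝒜 : a * b ∈ 𝒜 := by rw [← hab]; exact mul_mem_mul ha𝔞 hb𝔟
    obtain ⟨t, ht𝒜, hts⟩ := hmax (a * b) hs𝒜 hs𝔪
    -- step (a)
    have stepa : ∀ x ∈ 𝔞, ∃ y ∈ 𝔪 * 𝔞, ∃ r ∈ 𝒜, x = y + r * a := by
      intro x hx
      refine ⟨(1 - t * (a * b)) * x, mul_mem_mul hts hx, t * (b * x),
        h𝒜 (mul_mem_mul ht𝒜 (hb x hx)), by ring⟩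
    have hsm : ∀ r ∈ 𝒜, r * (a * b) ∈ 𝔪 → r ∈ 𝔪 := by
      intro r hr hrs
      have k1 : r * (1 - t * (a * b)) ∈ 𝔪 := hm_ideal r hr _ hts
      have k2 : t * (r * (a * b)) ∈ 𝔪 := hm_ideal t ht𝒜 _ hrs
      have : r = r * (1 - t * (a * b)) + t * (r * (a * b)) := by ring
      rw [this]
      exact add_mem k1 k2
    have hbm : ∀ M' : Submodule ℤ L, 𝒜 * M' ≤ M' → ∀ w ∈ 𝔞 * M', b * w ∈ M' := by
      intro M' hM' w hw
      refine Submodule.mul_induction_on hw (fun x hx m hm => ?_) (fun u v hu hv => ?_)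
      · have : b * (x * m) = (b * x) * m := by ring
        rw [this]
        exact hM' (mul_mem_mul (hb x hx) hm)
      · rw [mul_add]
        exact add_mem hu hv
    have hbm𝔪 : ∀ w ∈ 𝔪 * 𝔞, b * w ∈ 𝔪 := by
      intro w hw
      refine Submodule.mul_induction_on hw (fun m hm x hx => ?_) (fun u v hu hv => ?_)
      · have : b * (m * x) = (b * x) * m := by ring
        rw [this]
        exact hm_ideal _ (hb x hx) m hm
      · rw [mul_add]
        exact add_mem hu hv
    have hma : 𝔪 * 𝔞 ≤ 𝔞 := le_trans (mul_le_mul' hm_le le_rfl) ha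
    -- E1
    have E1 : M.toAddSubgroup.relIndex N.toAddSubgroup
        = 𝔪.toAddSubgroup.relIndex 𝒜.toAddSubgroup := by
      apply relIndex_eq_of_mul' 𝒜 𝔪 N M n₀
      · exact fun u hu => hAN (mul_mem_mul hu hn₀N)
      · exact fun v hv => ((hm_mem v).mp hv).2
      · exact fun u hu h => (hm_mem u).mpr ⟨hu, h⟩
      · intro w hw
        have : w ∈ M ⊔ 𝒜 * span ℤ {n₀} := hNgen ▸ hw
        rw [Submodule.mem_sup] at this
        obtain ⟨x, hx, v, hv, he⟩ := this
        rw [mulRight_map', Submodule.mem_map] at hv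
        obtain ⟨u, hu, rfl⟩ := hv
        exact ⟨x, hx, u, hu, he.symm⟩
    -- E3
    have E3 : (𝔪 * 𝔞).toAddSubgroup.relIndex 𝔞.toAddSubgroup
        = 𝔪.toAddSubgroup.relIndex 𝒜.toAddSubgroup := by
      apply relIndex_eq_of_mul' 𝒜 𝔪 𝔞 (𝔪 * 𝔞) a
      · exact fun u hu => ha (mul_mem_mul hu ha𝔞)
      · exact fun v hv => mul_mem_mul hv ha𝔞
      · intro u hu h
        apply hsm u hu
        have : u * (a * b) = b * (u * a) := by ring
        rw [this]
        exact hbm𝔪 _ h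
      · intro x hx
        obtain ⟨y, hy, r, hr, he⟩ := stepa x hx
        exact ⟨y, hy, r, hr, he⟩
    -- E2
    have E2 : (𝔞 * M).toAddSubgroup.relIndex (𝔞 * N).toAddSubgroup
        = (𝔪 * 𝔞).toAddSubgroup.relIndex 𝔞.toAddSubgroup := by
      have hvz : ∀ v ∈ 𝔪 * 𝔞, v * n₀ ∈ 𝔞 * M := by
        intro v hv
        refine Submodule.mul_induction_on hv (fun m hm x hx => ?_) (fun u w hu hw => ?_)
        · have : (m * x) * n₀ = x * (m * n₀) := by ring
          rw [this]
          exact mul_mem_mul hx ((hm_mem m).mp hm).2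
        · rw [add_mul]
          exact add_mem hu hw
      apply relIndex_eq_of_mul' 𝔞 (𝔪 * 𝔞) (𝔞 * N) (𝔞 * M) n₀
      · exact fun u hu => mul_mem_mul hu hn₀N
      · exact hvz
      · intro x hx h
        obtain ⟨y, hy, r, hr, he⟩ := stepa x hx
        have hra : (r * a) * n₀ ∈ 𝔞 * M := by
          have : (r * a) * n₀ = x * n₀ - y * n₀ := by rw [he]; ring
          rw [this]
          exact sub_mem h (hvz y hy)
        have hbra : b * ((r * a) * n₀) ∈ M := hbm M hAM _ hra
        have hrsn : (r * (a * b)) * n₀ ∈ M := by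
          have : (r * (a * b)) * n₀ = b * ((r * a) * n₀) := by ring
          rw [this]
          exact hbra
        have hrs𝒜 : r * (a * b) ∈ 𝒜 := h𝒜 (mul_mem_mul hr hs𝒜)
        have hrs𝔪 : r * (a * b) ∈ 𝔪 := (hm_mem _).mpr ⟨hrs𝒜, hrsn⟩
        have hr𝔪 : r ∈ 𝔪 := hsm r hr hrs𝔪
        rw [he]
        exact add_mem hy (mul_mem_mul hr𝔪 ha𝔞)
      · intro w hw
        have ha𝒜 : 𝔞 * 𝒜 = 𝔞 := by
          apply le_antisymm
          · rw [mul_comm 𝔞 𝒜] at *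
            exact ha
          · intro x hx
            have : x = x * 1 := (mul_one x).symm
            rw [this]
            exact mul_mem_mul hx h1
        have hdecomp : 𝔞 * N = 𝔞 * M ⊔ 𝔞 * span ℤ {n₀} := by
          rw [← hNgen, Submodule.mul_sup, ← mul_assoc, ha𝒜]
        have : w ∈ 𝔞 * M ⊔ 𝔞 * span ℤ {n₀} := hdecomp ▸ hw
        rw [Submodule.mem_sup] at this
        obtain ⟨x, hx, v, hv, he⟩ := this
        rw [mulRight_map', Submodule.mem_map] at hv
        obtain ⟨u, hu, rfl⟩ := hv
        exact ⟨x, hx, u, hu, he.symm⟩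
    rw [E2, E3, ← E1]
    exact hrel

end AuxLemmas

/-- Let `k` be a number field with ring of integers `R`, let `A` be an
`R`-order of a number field `L ⊇ k`, and let `A'` be the integral closure of `A` in `L` (the
ring of integers of `L`).  If `𝔞` is an invertible integral ideal of `A` (i.e. `𝔞 ⊆ A` and
`𝔞·𝔞⁻¹ = A`), then `[A : 𝔞] = [A' : 𝔞A']`. -/
theorem index_eq_index_extension_of_invertible
    (k L : Type*) [Field k] [NumberField k] [Field L] [Algebra k L] [FiniteDimensional k L]
    (A : Subring L) (hA : IsOrder k A)
    (I : AddSubgroup L)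
    (hIA : (I : Set L) ⊆ A)
    (hIdeal : ∀ a ∈ A, ∀ x ∈ I, a * x ∈ I)
    (hInv : IsInvertibleIdeal A (I : Set L)) :
    I.relIndex A.toAddSubgroup =
      (AddSubgroup.closure
        {x : L | ∃ i ∈ I, ∃ b ∈ integralClosure ℤ L, x = i * b}).relIndex
        (integralClosure ℤ L).toSubring.toAddSubgroup := by
  classical
  -- basic instances
  haveI : CharZero L := charZero_of_injective_algebraMap (algebraMap k L).injective
  haveI hsct : IsScalarTower ℚ k L := IsScalarTower.of_algebraMap_eq (fun x => by
    have : algebraMap ℚ L = (algebraMap k L).comp (algebraMap ℚ k) := Subsingleton.elim _ _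
    rw [this]; rfl)
  haveI : FiniteDimensional ℚ L := Module.Finite.trans k L
  haveI : NumberField L := ⟨⟩
  -- A is finitely generated as ℤ-module
  obtain ⟨hRA, ⟨s, hsA, hspan⟩, hfrac⟩ := hA
  set φ : 𝓞 k →+* L := (algebraMap k L).comp (algebraMap (𝓞 k) k) with hφ
  have hφr : ∀ ρ : 𝓞 k, φ ρ ∈ intImage k L := fun ρ => ⟨ρ, rfl⟩
  obtain ⟨G, hG⟩ : ∃ G : Finset (𝓞 k), span ℤ (G : Set (𝓞 k)) = ⊤ :=
    Module.finite_def.mp inferInstance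
  set T : Finset L := Finset.image (fun pr : (𝓞 k) × L => φ pr.1 * pr.2) (G ×ˢ s) with hT
  have hTA : (T : Set L) ⊆ (A : Set L) := by
    intro x hx
    simp only [hT, Finset.coe_image, Set.mem_image, Finset.mem_coe, Finset.mem_product] at hx
    obtain ⟨⟨g, y⟩, ⟨hg, hy⟩, rfl⟩ := hx
    exact A.mul_mem (hRA (hφr g)) (hsA hy)
  have hσ : ∀ σ : 𝓞 k, ∀ y ∈ s, φ σ * y ∈ span ℤ (T : Set L) := by
    intro σ y hy
    have hσtop : σ ∈ span ℤ (G : Set (𝓞 k)) := by rw [hG]; trivial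
    induction hσtop using Submodule.span_induction with
    | mem g hg =>
      apply Submodule.subset_span
      simp only [hT, Finset.coe_image, Set.mem_image, Finset.mem_coe, Finset.mem_product]
      exact ⟨(g, y), ⟨hg, hy⟩, rfl⟩
    | zero => simpa using Submodule.zero_mem _
    | add u v hu hv hu' hv' =>
      have : φ (u + v) * y = φ u * y + φ v * y := by rw [map_add, add_mul]
      rw [this]; exact add_mem hu' hv'
    | smul z u hu hu' =>
      have : φ (z • u) * y = z • (φ u * y) := by
        rw [map_zsmul, smul_mul_assoc]
      rw [this]; exact Submodule.smul_mem _ _ hu'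
  have hφmul : ∀ (ρ : 𝓞 k), ∀ x ∈ span ℤ (T : Set L), φ ρ * x ∈ span ℤ (T : Set L) := by
    intro ρ x hx
    induction hx using Submodule.span_induction with
    | mem t ht =>
      simp only [hT, Finset.coe_image, Set.mem_image, Finset.mem_coe, Finset.mem_product] at ht
      obtain ⟨⟨g, y⟩, ⟨hg, hy⟩, rfl⟩ := ht
      have : φ ρ * (φ g * y) = φ (ρ * g) * y := by rw [map_mul]; ring
      rw [this]; exact hσ (ρ * g) y hy
    | zero => simpa using Submodule.zero_mem _
    | add u v hu hv hu' hv' => rw [mul_add]; exact add_mem hu' hv'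
    | smul z u hu hu' =>
      rw [mul_smul_comm]; exact Submodule.smul_mem _ _ hu'
  have hsub : ∀ a : L, a ∈ Submodule.span ↥(intImage k L) (s : Set L) →
      a ∈ span ℤ (T : Set L) := by
    intro a ha
    induction ha using Submodule.span_induction with
    | mem y hy =>
      have h1y := hσ 1 y hy
      rwa [map_one, one_mul] at h1y
    | zero => exact Submodule.zero_mem _
    | add u v hu hv hu' hv' => exact add_mem hu' hv'
    | smul r u hu hu' =>
      obtain ⟨ρ, hρ⟩ := r.2
      have hval : r • u = φ ρ * u := by rw [hφ, hρ]; rfl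
      rw [hval]
      exact hφmul ρ u hu'
  -- every element of A is integral over ℤ
  have hAfg : (subalgebraOfSubring A).toSubmodule.FG := by
    refine ⟨T, le_antisymm ?_ ?_⟩
    · rw [Submodule.span_le]
      intro x hx
      exact hTA hx
    · intro a ha
      exact hsub a (hspan a ha)
  have Aint : ∀ x ∈ A, IsIntegral ℤ x := fun x hx =>
    IsIntegral.of_mem_of_fg _ hAfg x hx
  -- aeval closure
  have haev : ∀ (p : Polynomial ℤ) (x : L), x ∈ A → Polynomial.aeval x p ∈ A := by
    intro p x hx
    induction p using Polynomial.induction_on' with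
    | add p q hp hq => rw [map_add]; exact A.add_mem hp hq
    | monomial n c =>
      rw [Polynomial.aeval_monomial]
      exact A.mul_mem (by
        have h2 : algebraMap ℤ L c = (c : L) := by simp
        rw [h2]; exact intCast_mem A c) (A.pow_mem hx n)
  -- denominators
  have hden : ∀ w : L, ∃ c : ℤ, c ≠ 0 ∧ (c : L) * w ∈ A := by
    intro w
    obtain ⟨p, hp, q, hq, hq0, rfl⟩ := hfrac w
    have hqint : IsIntegral ℤ q := Aint q hq
    set P := minpoly ℤ q with hP
    have hc0 : P.coeff 0 ≠ 0 := by
      have h1 : minpoly ℚ q = P.map (algebraMap ℤ ℚ) :=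
        minpoly.isIntegrallyClosed_eq_field_fractions' ℚ hqint
      have h2 : (minpoly ℚ q).coeff 0 ≠ 0 :=
        minpoly.coeff_zero_ne_zero (IsIntegral.of_finite ℚ q) hq0
      rw [h1, Polynomial.coeff_map] at h2
      intro h
      rw [h] at h2
      simp at h2
    refine ⟨P.coeff 0, hc0, ?_⟩
    have hkey : q * Polynomial.aeval q P.divX + ((P.coeff 0 : ℤ) : L) = 0 := by
      have := Polynomial.X_mul_divX_add (p := P)
      have h0 : Polynomial.aeval q (Polynomial.X * P.divX + Polynomial.C (P.coeff 0)) = 0 := by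
        rw [this]
        exact minpoly.aeval ℤ q
      rw [map_add, map_mul, Polynomial.aeval_X, Polynomial.aeval_C] at h0
      simpa using h0
    have hu : Polynomial.aeval q P.divX ∈ A := haev _ q hq
    have : ((P.coeff 0 : ℤ) : L) * (p / q) = -(Polynomial.aeval q P.divX * p) := by
      field_simp
      linear_combination p * hkey
    rw [this]
    exact A.neg_mem (A.mul_mem hu hp)
  -- submodules
  set 𝒜 : Submodule ℤ L := span ℤ ((A.toAddSubgroup : Set L)) with h𝒜
  have h𝒜add : 𝒜.toAddSubgroup = A.toAddSubgroup := Submodule.span_int_eq _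
  have hmem𝒜 : ∀ x : L, x ∈ 𝒜 ↔ x ∈ A := by
    intro x
    rw [← Submodule.mem_toAddSubgroup, h𝒜add]
    rfl
  set 𝔞 : Submodule ℤ L := span ℤ ((I : Set L)) with h𝔞
  have h𝔞add : 𝔞.toAddSubgroup = I := Submodule.span_int_eq _
  have hmem𝔞 : ∀ x : L, x ∈ 𝔞 ↔ x ∈ I := by
    intro x
    rw [← Submodule.mem_toAddSubgroup, h𝔞add]
  set 𝔟 : Submodule ℤ L := span ℤ (invSet A (I : Set L)) with h𝔟
  have hab : 𝔞 * 𝔟 = 𝒜 := by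
    rw [h𝔞, h𝔟, Submodule.span_mul_span]
    have hset : (I : Set L) * invSet A (I : Set L)
        = {x : L | ∃ d ∈ (I : Set L), ∃ e ∈ invSet A (I : Set L), x = d * e} := by
      ext x
      rw [Set.mem_mul]
      constructor
      · rintro ⟨d, hd, e, he, rfl⟩; exact ⟨d, hd, e, he, rfl⟩
      · rintro ⟨d, hd, e, he, rfl⟩; exact ⟨d, hd, e, he, rfl⟩
    rw [hset]
    apply Submodule.toAddSubgroup_injective
    rw [Submodule.span_int_eq_addSubgroupClosure, hInv, h𝒜add]
  have h1 : (1 : L) ∈ 𝒜 := (hmem𝒜 1).mpr A.one_mem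
  have h𝒜𝒜 : 𝒜 * 𝒜 ≤ 𝒜 := by
    rw [Submodule.mul_le]
    intro u hu v hv
    exact (hmem𝒜 _).mpr (A.mul_mem ((hmem𝒜 u).mp hu) ((hmem𝒜 v).mp hv))
  have ha : 𝒜 * 𝔞 ≤ 𝔞 := by
    rw [Submodule.mul_le]
    intro u hu v hv
    exact (hmem𝔞 _).mpr (hIdeal u ((hmem𝒜 u).mp hu) v ((hmem𝔞 v).mp hv))
  set 𝒩 : Submodule ℤ L := Subalgebra.toSubmodule (integralClosure ℤ L) with h𝒩
  have hmem𝒩 : ∀ x : L, x ∈ 𝒩 ↔ x ∈ integralClosure ℤ L := fun x => Iff.rfl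
  have hA𝒩 : 𝒜 ≤ 𝒩 := by
    rw [h𝒜, Submodule.span_le]
    intro x hx
    exact (hmem𝒩 x).mpr (Aint x hx)
  have hAN : 𝒜 * 𝒩 ≤ 𝒩 := by
    rw [Submodule.mul_le]
    intro u hu v hv
    exact (hmem𝒩 _).mpr (mul_mem ((hmem𝒩 u).mp (hA𝒩 hu)) ((hmem𝒩 v).mp hv))
  -- finiteness of [𝒩 : 𝒜]
  haveI hNoeth : IsNoetherian ℤ ↥(integralClosure ℤ L) :=
    inferInstanceAs (IsNoetherian ℤ (𝓞 L))
  haveI hNoeth2 : IsNoetherian ℤ ↥𝒩 := hNoeth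
  have hNfg : 𝒩.FG := (Submodule.fg_top 𝒩).mp (IsNoetherian.noetherian ⊤)
  obtain ⟨TN, hTN⟩ := hNfg
  choose cf hcf0 hcfA using hden
  set c : ℤ := ∏ w ∈ TN, cf w with hcdef
  have hc0 : c ≠ 0 := Finset.prod_ne_zero_iff.mpr (fun w _ => hcf0 w)
  have hcT : ∀ w ∈ TN, (c : L) * w ∈ A := by
    intro w hw
    have hsplit : c = (∏ v ∈ TN.erase w, cf v) * cf w := by
      rw [hcdef, ← Finset.prod_erase_mul TN cf hw]
    rw [hsplit, Int.cast_mul, mul_assoc]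
    exact A.mul_mem (intCast_mem A _) (hcfA w)
  have hcN : ∀ w ∈ 𝒩, (c : L) * w ∈ A := by
    intro w hw
    rw [← hTN] at hw
    induction hw using Submodule.span_induction with
    | mem t ht => exact hcT t ht
    | zero => rw [mul_zero]; exact A.zero_mem
    | add u v hu hv hu' hv' => rw [mul_add]; exact A.add_mem hu' hv'
    | smul z u hu hu' =>
      rw [mul_smul_comm]
      exact zsmul_mem (show ((c : L) * u) ∈ A.toAddSubgroup from hu') z
  have hQfin : Finite (↥𝒩.toAddSubgroup ⧸ 𝒜.toAddSubgroup.addSubgroupOf 𝒩.toAddSubgroup) := by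
    haveI hMF : Module.Finite ℤ ↥𝒩 := Module.Finite.iff_fg.mpr ⟨TN, hTN⟩
    haveI hFG1 : AddGroup.FG ↥𝒩 := Module.Finite.iff_addGroup_fg.mp hMF
    haveI hFG2 : AddGroup.FG ↥𝒩.toAddSubgroup := hFG1
    haveI hFG3 : AddGroup.FG (↥𝒩.toAddSubgroup ⧸ 𝒜.toAddSubgroup.addSubgroupOf 𝒩.toAddSubgroup) :=
      AddGroup.fg_of_surjective (f := QuotientAddGroup.mk' _) (QuotientAddGroup.mk'_surjective _)
    apply AddCommGroup.finite_of_fg_torsion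
    intro q
    induction q using QuotientAddGroup.induction_on with
    | H w =>
      rw [isOfFinAddOrder_iff_zsmul_eq_zero]
      refine ⟨c, hc0, ?_⟩
      show c • (QuotientAddGroup.mk' (𝒜.toAddSubgroup.addSubgroupOf 𝒩.toAddSubgroup) w) = 0
      rw [← map_zsmul, QuotientAddGroup.mk'_apply, QuotientAddGroup.eq_zero_iff,
        AddSubgroup.mem_addSubgroupOf]
      have hco : ((c • w : ↥𝒩.toAddSubgroup) : L) = (c : L) * (w : L) := by
        push_cast
        rw [zsmul_eq_mul]
      show ((c • w : ↥𝒩.toAddSubgroup) : L) ∈ 𝒜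
      rw [hco]
      exact (hmem𝒜 _).mpr (hcN (w : L) w.2)
  have hfin : 𝒜.toAddSubgroup.relIndex 𝒩.toAddSubgroup ≠ 0 := by
    haveI := hQfin
    exact AddSubgroup.index_ne_zero_of_finite
  -- main lemma application and final arithmetic
  set n : ℕ := 𝒜.toAddSubgroup.relIndex 𝒩.toAddSubgroup with hndef
  have hML := main_lemma 𝔞 𝔟 𝒜 h1 h𝒜𝒜 hab ha n hfin 𝒜 𝒩 h𝒜𝒜 hAN hA𝒩 rfl
  have h𝔞𝒜 : 𝔞 * 𝒜 = 𝔞 := by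
    apply le_antisymm
    · rw [mul_comm]
      exact ha
    · intro x hx
      have hx1 : x = x * 1 := (mul_one x).symm
      rw [hx1]
      exact Submodule.mul_mem_mul hx h1
  rw [h𝔞𝒜] at hML
  have h𝔞le𝒜 : 𝔞 ≤ 𝒜 := fun x hx => (hmem𝒜 x).mpr (hIA ((hmem𝔞 x).mp hx))
  have h𝔞le : 𝔞.toAddSubgroup ≤ 𝒜.toAddSubgroup := h𝔞le𝒜
  have h𝒜le : 𝒜.toAddSubgroup ≤ 𝒩.toAddSubgroup := hA𝒩
  have h𝔞sub : 𝔞 ≤ 𝔞 * 𝒩 := by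
    intro x hx
    have hx1 : x = x * 1 := (mul_one x).symm
    rw [hx1]
    exact Submodule.mul_mem_mul hx ((hmem𝒩 1).mpr (one_mem _))
  have h𝔞𝒩N : 𝔞 * 𝒩 ≤ 𝒩 := le_trans (mul_le_mul' h𝔞le𝒜 le_rfl) hAN
  have chain1 := AddSubgroup.relIndex_mul_relIndex 𝔞.toAddSubgroup 𝒜.toAddSubgroup
    𝒩.toAddSubgroup h𝔞le h𝒜le
  have chain2 := AddSubgroup.relIndex_mul_relIndex 𝔞.toAddSubgroup (𝔞 * 𝒩).toAddSubgroup
    𝒩.toAddSubgroup (by exact h𝔞sub) (by exact h𝔞𝒩N)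
  rw [hML] at chain2
  have heq : 𝔞.toAddSubgroup.relIndex 𝒜.toAddSubgroup
      = (𝔞 * 𝒩).toAddSubgroup.relIndex 𝒩.toAddSubgroup := by
    have hc12 := chain1.trans chain2.symm
    rw [mul_comm] at hc12
    exact Nat.eq_of_mul_eq_mul_left (Nat.pos_of_ne_zero hfin) hc12
  have hRHS : AddSubgroup.closure {x : L | ∃ i ∈ I, ∃ b ∈ integralClosure ℤ L, x = i * b}
      = (𝔞 * 𝒩).toAddSubgroup := by
    have hprod : 𝔞 * 𝒩 = span ℤ ((I : Set L) * (𝒩 : Set L)) := by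
      calc 𝔞 * 𝒩 = span ℤ (I : Set L) * span ℤ (𝒩 : Set L) := by
            rw [h𝔞, Submodule.span_eq]
        _ = span ℤ ((I : Set L) * (𝒩 : Set L)) := Submodule.span_mul_span ℤ _ _
    have hset : (I : Set L) * (𝒩 : Set L)
        = {x : L | ∃ i ∈ I, ∃ b ∈ integralClosure ℤ L, x = i * b} := by
      ext x
      rw [Set.mem_mul]
      constructor
      · rintro ⟨d, hd, e, he, rfl⟩
        exact ⟨d, hd, e, (hmem𝒩 e).mp he, rfl⟩
      · rintro ⟨d, hd, e, he, rfl⟩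
        exact ⟨d, hd, e, (hmem𝒩 e).mpr he, rfl⟩
    rw [hprod, hset, Submodule.span_int_eq_addSubgroupClosure]
  have hsubring : (integralClosure ℤ L).toSubring.toAddSubgroup = 𝒩.toAddSubgroup := by
    ext x
    constructor
    · intro hx; exact hx
    · intro hx; exact hx
  rw [hRHS, hsubring, ← heq, h𝔞add, h𝒜add]

end
end

section
/- Let k be a number field with ring of integers R, let A be an R-order of a number field L ⊇ k, and let A' be the integral closure of A in L. If the Dedekind different 𝒟_{A/R} is an invertible ideal of A (equivalently, A is a Gorenstein ring), then 𝒟_{A/R}·A' = 𝒞_A·𝒟_{A'/R}, where 𝒞_A = {x ∈ A' : x·A' ⊆ A} is the conductor of A and 𝒟_{A'/R} is the different ideal of the ring of integers A' over R. -/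
open NumberField IntermediateField

noncomputable section

/-! ### Auxiliary material for the proof -/

section Auxiliary

open scoped nonZeroDivisors

namespace Statement8

/-! #### A weak version of `FractionalIdeal.exists_not_mem_one_of_ne_bot`,
assuming only that the base ring is a Noetherian domain of Krull dimension at most one
(rather than a Dedekind domain). The proofs are adapted from
`Mathlib.RingTheory.DedekindDomain.Ideal`. -/

variable {R : Type*} [CommRing R] [IsDomain R] [IsNoetherianRing R] [Ring.DimensionLEOne R]
variable {K : Type*} [Field K] [Algebra R K] [IsFractionRing R K]

theorem exists_multiset_prod_cons_le_and_prod_not_le' (hNF : ¬IsField R)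
    {I M : Ideal R} (hI0 : I ≠ ⊥) (hIM : I ≤ M) [hM : M.IsMaximal] :
    ∃ Z : Multiset (PrimeSpectrum R),
      (M ::ₘ Z.map PrimeSpectrum.asIdeal).prod ≤ I ∧
        ¬Multiset.prod (Z.map PrimeSpectrum.asIdeal) ≤ I := by
  obtain ⟨Z₀, hZ₀⟩ := PrimeSpectrum.exists_primeSpectrum_prod_le_and_ne_bot_of_domain hNF hI0
  obtain ⟨Z, ⟨hZI, hprodZ⟩, h_eraseZ⟩ :=
    wellFounded_lt.has_min
      {Z | (Z.map PrimeSpectrum.asIdeal).prod ≤ I ∧ (Z.map PrimeSpectrum.asIdeal).prod ≠ ⊥}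
      ⟨Z₀, hZ₀.1, hZ₀.2⟩
  obtain ⟨_, hPZ', hPM⟩ := hM.isPrime.multiset_prod_le.mp (hZI.trans hIM)
  obtain ⟨P, hPZ, rfl⟩ := Multiset.mem_map.mp hPZ'
  classical
    have := Multiset.map_erase PrimeSpectrum.asIdeal (fun _ _ => PrimeSpectrum.ext) P Z
    obtain ⟨hP0, hZP0⟩ : P.asIdeal ≠ ⊥ ∧ ((Z.erase P).map PrimeSpectrum.asIdeal).prod ≠ ⊥ := by
      rwa [Ne, ← Multiset.cons_erase hPZ', Multiset.prod_cons, Ideal.mul_eq_bot, not_or, ←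
        this] at hprodZ
    have hPM' := (P.isPrime.isMaximal hP0).eq_of_le hM.ne_top hPM
    subst hPM'
    refine ⟨Z.erase P, ?_, ?_⟩
    · convert hZI
      rw [this, Multiset.cons_erase hPZ']
    · refine fun h => h_eraseZ (Z.erase P) ⟨h, ?_⟩ (Multiset.erase_lt.mpr hPZ)
      exact hZP0

theorem not_inv_le_one_of_ne_bot' {I : Ideal R}
    (hI0 : I ≠ ⊥) (hI1 : I ≠ ⊤) : ¬(I⁻¹ : FractionalIdeal R⁰ K) ≤ 1 := by
  have hNF : ¬IsField R := fun h ↦ letI := h.toField; (Ideal.eq_bot_or_top I).elim hI0 hI1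
  wlog hM : I.IsMaximal generalizing I
  · rcases I.exists_le_maximal hI1 with ⟨M, hmax, hIM⟩
    have hMbot : M ≠ ⊥ := (M.bot_lt_of_maximal hNF).ne'
    refine mt (le_trans <| FractionalIdeal.inv_anti_mono ?_ ?_ ?_) (this hMbot hmax.ne_top hmax) <;>
      simpa only [FractionalIdeal.coeIdeal_ne_zero, FractionalIdeal.coeIdeal_le_coeIdeal]
  have hI0' : ⊥ < I := I.bot_lt_of_maximal hNF
  obtain ⟨⟨a, haI⟩, ha0⟩ := Submodule.nonzero_mem_of_bot_lt hI0'
  replace ha0 : a ≠ 0 := Subtype.coe_injective.ne ha0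
  let J : Ideal R := Ideal.span {a}
  have hJ0 : J ≠ ⊥ := mt Ideal.span_singleton_eq_bot.mp ha0
  have hJI : J ≤ I := I.span_singleton_le_iff_mem.2 haI
  obtain ⟨Z, hle, hnle⟩ := exists_multiset_prod_cons_le_and_prod_not_le' hNF hJ0 hJI
  obtain ⟨b, hbZ, hbJ⟩ := SetLike.not_le_iff_exists.mp hnle
  have hnz_fa : algebraMap R K a ≠ 0 :=
    mt ((injective_iff_map_eq_zero _).mp (IsFractionRing.injective R K) a) ha0
  refine Set.not_subset.2 ⟨algebraMap R K b * (algebraMap R K a)⁻¹,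
    (FractionalIdeal.mem_inv_iff ?_).mpr ?_, ?_⟩
  · exact FractionalIdeal.coeIdeal_ne_zero.mpr hI0'.ne'
  · rintro y₀ hy₀
    obtain ⟨y, h_Iy, rfl⟩ := (FractionalIdeal.mem_coeIdeal _).mp hy₀
    rw [mul_comm, ← mul_assoc, ← RingHom.map_mul]
    have h_yb : y * b ∈ J := by
      apply hle
      rw [Multiset.prod_cons]
      exact Submodule.smul_mem_smul h_Iy hbZ
    rw [Ideal.mem_span_singleton'] at h_yb
    rcases h_yb with ⟨c, hc⟩
    rw [← hc, RingHom.map_mul, mul_assoc, mul_inv_cancel₀ hnz_fa, mul_one]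
    apply FractionalIdeal.coe_mem_one
  · refine mt (FractionalIdeal.mem_one_iff _).mp ?_
    rintro ⟨x', h₂_abs⟩
    rw [← div_eq_mul_inv, eq_div_iff_mul_eq hnz_fa, ← RingHom.map_mul] at h₂_abs
    have := Ideal.mem_span_singleton'.mpr ⟨x', IsFractionRing.injective R K h₂_abs⟩
    contradiction

theorem exists_not_mem_one_of_ne_bot' {I : Ideal R} (hI0 : I ≠ ⊥)
    (hI1 : I ≠ ⊤) : ∃ x ∈ (I⁻¹ : FractionalIdeal R⁰ K), x ∉ (1 : FractionalIdeal R⁰ K) :=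
  Set.not_subset.1 <| not_inv_le_one_of_ne_bot' hI0 hI1

/-! #### Elementary lemmas about the bespoke notions -/

variable {L : Type*} [Field L]

theorem mul_mem_closure {s t : Set L} {c : L}
    (h : ∀ y ∈ s, c * y ∈ AddSubgroup.closure t) {x : L}
    (hx : x ∈ AddSubgroup.closure s) : c * x ∈ AddSubgroup.closure t := by
  have hle : AddSubgroup.closure s ≤ (AddSubgroup.closure t).comap (AddMonoidHom.mulLeft c) :=
    (AddSubgroup.closure_le _).2 fun y hy => by
      simpa [AddSubgroup.mem_comap] using h y hy
  simpa [AddSubgroup.mem_comap] using hle hx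

variable (k : Type*) [Field k] [NumberField k] [Algebra k L] [FiniteDimensional k L]

theorem trace_isIntegral {x : L} (hx : IsIntegral ℤ x) :
    IsIntegral ℤ (Algebra.trace k L x) :=
  Algebra.isIntegral_trace hx

/-- The complementary module as an additive subgroup. -/
def compModAdd (A : Subring L) : AddSubgroup L where
  carrier := complementaryModule k A
  zero_mem' := fun a _ => by
    rw [zero_mul, map_zero]; exact isIntegral_zero
  add_mem' := fun {x y} hx hy a ha => by
    rw [add_mul, map_add]; exact (hx a ha).add (hy a ha)
  neg_mem' := fun {x} hx a ha => by
    rw [neg_mul, map_neg]; exact (hx a ha).neg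

variable {k}

theorem mul_mem_compMod {A : Subring L} {w a : L}
    (hw : w ∈ complementaryModule k A) (ha : a ∈ A) :
    a * w ∈ complementaryModule k A := fun b hb => by
  have := hw (a * b) (A.mul_mem ha hb)
  rwa [show w * (a * b) = a * w * b by ring] at this

theorem compMod_anti {A B : Subring L} (hAB : A ≤ B) :
    complementaryModule k B ⊆ complementaryModule k A :=
  fun _ hw a ha => hw a (hAB ha)

theorem one_mem_compMod {A : Subring L} (h : ∀ a ∈ A, IsIntegral ℤ a) :
    (1 : L) ∈ complementaryModule k A := fun a ha => by
  rw [one_mul]; exact trace_isIntegral k (h a ha)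

theorem isIntegral_of_mem_order {A : Subring L} (hA : IsOrder k A) {a : L} (ha : a ∈ A) :
    IsIntegral ℤ a := by
  obtain ⟨s, hs, hspan⟩ := hA.2.1
  have hR₀int : ∀ r : ↥(intImage k L), IsIntegral ℤ (r : L) := by
    rintro ⟨r, hr⟩
    obtain ⟨x, hx⟩ := hr
    have h1 : IsIntegral ℤ (algebraMap (𝓞 k) k x) := NumberField.RingOfIntegers.isIntegral_coe x
    have h2 := h1.map (algebraMap k L).toIntAlgHom
    show IsIntegral ℤ r
    rw [← hx]
    exact h2
  haveI : Algebra.IsIntegral ℤ ↥(intImage k L) :=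
    ⟨fun r => (isIntegral_algHom_iff ((intImage k L).subtype.toIntAlgHom)
      Subtype.val_injective).mp (hR₀int r)⟩
  let SA : Subalgebra ↥(intImage k L) L :=
    { A.toSubsemiring with algebraMap_mem' := fun r => hA.1 r.2 }
  have hfg : (Subalgebra.toSubmodule SA).FG := by
    refine ⟨s, le_antisymm (Submodule.span_le.2 fun x hx => hs hx) fun x hx => hspan x hx⟩
  have hint : IsIntegral ↥(intImage k L) a := IsIntegral.of_mem_of_fg SA hfg a ha
  exact isIntegral_trans a hint

theorem order_le_integralClosure {A : Subring L} (hA : IsOrder k A) :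
    A ≤ (integralClosure ℤ L).toSubring :=
  fun _ ha => isIntegral_of_mem_order hA ha

theorem conductor_mul_compMod {A : Subring L} {c w : L}
    (hc : c ∈ conductorSet (integralClosure ℤ L).toSubring A)
    (hw : w ∈ complementaryModule k A) :
    c * w ∈ complementaryModule k (integralClosure ℤ L).toSubring := by
  intro a ha
  have h1 : c * a ∈ A := hc.2 a ha
  have := hw (c * a) h1
  rwa [show w * (c * a) = c * w * a by ring] at this

end Statement8

end Auxiliary

/-! ### Instances for an order -/

section OrderInstances

open scoped nonZeroDivisors

namespace Statement8

variable {k L : Type*} [Field k] [NumberField k] [Field L] [Algebra k L] [FiniteDimensional k L]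

theorem isFractionRing_order {A : Subring L} (hA : IsOrder k A) : IsFractionRing ↥A L where
  map_units := by
    rintro ⟨⟨y, hyA⟩, hy⟩
    have hy0 : y ≠ 0 := by
      intro h0
      have : (⟨y, hyA⟩ : ↥A) ≠ 0 := mem_nonZeroDivisors_iff_ne_zero.mp hy
      exact this (Subtype.ext h0)
    exact isUnit_iff_ne_zero.mpr hy0
  surj := by
    intro z
    obtain ⟨a, ha, b, hb, hb0, rfl⟩ := hA.2.2 z
    refine ⟨⟨⟨a, ha⟩, ⟨⟨b, hb⟩, mem_nonZeroDivisors_iff_ne_zero.mpr fun h => hb0 ?_⟩⟩, ?_⟩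
    · exact congrArg Subtype.val h
    · show a / b * b = a
      field_simp
  exists_of_eq := by
    intro x y h
    exact ⟨1, by simpa using Subtype.ext (h : (x : L) = y)⟩

theorem isNoetherian_int_order {A : Subring L} (hA : IsOrder k A) : IsNoetherian ℤ ↥A := by
  haveI : CharZero L := charZero_of_injective_algebraMap (algebraMap k L).injective
  haveI : IsScalarTower ℚ k L := IsScalarTower.of_algebraMap_eq' (Subsingleton.elim _ _)
  haveI : FiniteDimensional ℚ L := Module.Finite.trans k L
  haveI : IsNoetherian ℤ ↥(integralClosure ℤ L) := IsIntegralClosure.isNoetherian ℤ ℚ L _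
  -- transfer along the inclusion `A ≤ integralClosure ℤ L`
  let M : Submodule ℤ ↥(integralClosure ℤ L) :=
    { carrier := {x : ↥(integralClosure ℤ L) | (x : L) ∈ A}
      add_mem' := fun hx hy => A.add_mem hx hy
      zero_mem' := A.zero_mem
      smul_mem' := by
        intro n x hx
        have : ((n • x : ↥(integralClosure ℤ L)) : L) = n • (x : L) := rfl
        rw [Set.mem_setOf_eq, this]
        exact AddSubgroup.zsmul_mem A.toAddSubgroup hx n }
  haveI : IsNoetherian ℤ ↥M := inferInstance
  let e2 : ↥M ≃+ ↥A :=
    { toFun := fun x => ⟨x.1.1, x.2⟩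
      invFun := fun x => ⟨⟨x.1, isIntegral_of_mem_order hA x.2⟩, x.2⟩
      left_inv := fun x => rfl
      right_inv := fun x => rfl
      map_add' := fun x y => rfl }
  exact isNoetherian_of_linearEquiv e2.toIntLinearEquiv

theorem isNoetherianRing_order {A : Subring L} (hA : IsOrder k A) : IsNoetherianRing ↥A := by
  haveI := isNoetherian_int_order hA
  exact isNoetherian_of_tower ℤ (inferInstanceAs (IsNoetherian ℤ ↥A))

theorem dimensionLEOne_order {A : Subring L} (hA : IsOrder k A) : Ring.DimensionLEOne ↥A := by
  haveI := isNoetherian_int_order hA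
  haveI : Module.Finite ℤ ↥A := ⟨IsNoetherian.noetherian ⊤⟩
  haveI : Algebra.IsIntegral ℤ ↥A := Algebra.IsIntegral.of_finite ℤ ↥A
  constructor
  intro p hp0 hp
  haveI := hp
  obtain ⟨x, hxp, hx0⟩ := (Submodule.ne_bot_iff p).mp hp0
  have hcomne : p.comap (algebraMap ℤ ↥A) ≠ ⊥ :=
    Ideal.comap_ne_bot_of_integral_mem hx0 hxp (Algebra.IsIntegral.isIntegral x)
  have hcommax : (p.comap (algebraMap ℤ ↥A)).IsMaximal :=
    Ideal.IsPrime.isMaximal (Ideal.IsPrime.comap _) hcomne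
  exact Ideal.isMaximal_of_isIntegral_of_isMaximal_comap p hcommax

end Statement8

end OrderInstances

/-! ### The two key facts -/

section KeyFacts

open scoped nonZeroDivisors

namespace Statement8

variable {k L : Type*} [Field k] [NumberField k] [Field L] [Algebra k L] [FiniteDimensional k L]

/-- Invertibility of the Dedekind different implies `1 ∈ 𝒟·W` (as an additive group). -/
theorem one_mem_closure_DW {A : Subring L} (hA : IsOrder k A)
    (hInv : IsInvertibleIdeal A (dedekindDifferent k A)) :
    (1 : L) ∈ AddSubgroup.closure
      {x : L | ∃ d ∈ dedekindDifferent k A, ∃ w ∈ complementaryModule k A, x = d * w} := by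
  by_contra hone
  set gensDW : Set L :=
    {x : L | ∃ d ∈ dedekindDifferent k A, ∃ w ∈ complementaryModule k A, x = d * w} with hgensDW
  set gensInv : Set L :=
    {x : L | ∃ d ∈ dedekindDifferent k A, ∃ e ∈ invSet A (dedekindDifferent k A), x = d * e}
    with hgensInv
  have honeW : (1 : L) ∈ complementaryModule k A :=
    one_mem_compMod fun a ha => isIntegral_of_mem_order hA ha
  have honeInv : (1 : L) ∈ AddSubgroup.closure gensInv := by
    rw [hgensInv, hInv]; exact A.one_mem
  have hIA : ∀ x ∈ AddSubgroup.closure gensDW, x ∈ A := by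
    intro x hx
    refine (AddSubgroup.closure_le A.toAddSubgroup).2 ?_ hx
    rintro _ ⟨d, hd, w, hw, rfl⟩
    exact hd w hw
  -- the corresponding ideal of `A`
  let I : Ideal ↥A :=
    { carrier := {a : ↥A | (a : L) ∈ AddSubgroup.closure gensDW}
      add_mem' := by
        intro a b ha hb
        show ((a + b : ↥A) : L) ∈ AddSubgroup.closure gensDW
        push_cast
        exact AddSubgroup.add_mem _ ha hb
      zero_mem' := by
        show ((0 : ↥A) : L) ∈ AddSubgroup.closure gensDW
        push_cast
        exact AddSubgroup.zero_mem _
      smul_mem' := by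
        intro r x hx
        show ((r • x : ↥A) : L) ∈ AddSubgroup.closure gensDW
        have : ((r • x : ↥A) : L) = (r : L) * (x : L) := rfl
        rw [this]
        refine mul_mem_closure ?_ hx
        rintro _ ⟨d, hd, w, hw, rfl⟩
        exact AddSubgroup.subset_closure
          ⟨d, hd, (r : L) * w, mul_mem_compMod hw r.2, by ring⟩ }
  have hItop : I ≠ ⊤ := by
    intro h
    exact hone (by simpa using show ((1 : ↥A) : L) ∈ AddSubgroup.closure gensDW from (Ideal.eq_top_iff_one I).mp h)
  have hIbot : I ≠ ⊥ := by
    have hdex : ∃ d ∈ dedekindDifferent k A, d ≠ 0 := by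
      by_contra hd
      push_neg at hd
      have : (1 : L) ∈ (⊥ : AddSubgroup L) := by
        refine (AddSubgroup.closure_le ⊥).2 ?_ honeInv
        rintro _ ⟨d, hdm, e, _, rfl⟩
        simp [hd d hdm]
      simpa using this
    obtain ⟨d, hd, hd0⟩ := hdex
    have hdA : d ∈ A := by simpa using hd 1 honeW
    refine (Submodule.ne_bot_iff I).mpr ⟨⟨d, hdA⟩, ?_, fun h => hd0 (congrArg Subtype.val h)⟩
    exact AddSubgroup.subset_closure ⟨d, hd, 1, honeW, (mul_one d).symm⟩
  -- fractional ideal machinery over the order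
  haveI := isFractionRing_order hA
  haveI := isNoetherianRing_order hA
  haveI := dimensionLEOne_order hA
  obtain ⟨x, hxinv, hxone⟩ := exists_not_mem_one_of_ne_bot' (K := L) hIbot hItop
  -- `x` multiplies the additive group generated by `𝒟·W` into `A`
  have hxA : ∀ i ∈ AddSubgroup.closure gensDW, x * i ∈ A := by
    intro i hi
    have hiA : i ∈ A := hIA i hi
    have hy : algebraMap ↥A L ⟨i, hiA⟩ ∈ (I : FractionalIdeal (↥A)⁰ L) := by
      rw [FractionalIdeal.mem_coeIdeal]
      exact ⟨⟨i, hiA⟩, hi, rfl⟩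
    have hx1 := (FractionalIdeal.mem_inv_iff
      (FractionalIdeal.coeIdeal_ne_zero.mpr hIbot)).mp hxinv _ hy
    obtain ⟨b, hb⟩ := (FractionalIdeal.mem_one_iff _).mp hx1
    have : (b : L) = x * i := hb
    rw [← this]; exact b.2
  -- first step: `x·d ∈ 𝒟` for all `d ∈ 𝒟`
  have hxd : ∀ d ∈ dedekindDifferent k A, x * d ∈ dedekindDifferent k A := by
    intro d hd w hw
    have key : x * d * w * 1 ∈ A.toAddSubgroup := by
      rw [← AddSubgroup.closure_eq A.toAddSubgroup]
      refine mul_mem_closure ?_ honeInv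
      rintro _ ⟨d', hd', e', he', rfl⟩
      have h1 : x * (d' * w) ∈ A :=
        hxA _ (AddSubgroup.subset_closure ⟨d', hd', w, hw, rfl⟩)
      have h2 : e' * d ∈ A := he' d hd
      refine AddSubgroup.subset_closure ?_
      show x * d * w * (d' * e') ∈ (A.toAddSubgroup : Set L)
      rw [show x * d * w * (d' * e') = (x * (d' * w)) * (e' * d) by ring]
      exact A.mul_mem h1 h2
    simpa using key
  -- hence `x ∈ A`
  have hxmem : x ∈ A := by
    have key : x * 1 ∈ A.toAddSubgroup := by
      rw [← AddSubgroup.closure_eq A.toAddSubgroup]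
      refine mul_mem_closure ?_ honeInv
      rintro _ ⟨d', hd', e', he', rfl⟩
      have h1 : e' * (x * d') ∈ A := he' (x * d') (hxd d' hd')
      refine AddSubgroup.subset_closure ?_
      show x * (d' * e') ∈ (A.toAddSubgroup : Set L)
      rw [show x * (d' * e') = e' * (x * d') by ring]
      exact h1
    simpa using key
  exact hxone ((FractionalIdeal.mem_one_iff _).mpr ⟨⟨x, hxmem⟩, rfl⟩)

/-- Gorenstein crux: if the Dedekind different is invertible, then `𝒟⁻¹ ⊆ W`. -/
theorem invSet_different_subset_compMod {A : Subring L} (hA : IsOrder k A)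
    (hInv : IsInvertibleIdeal A (dedekindDifferent k A)) :
    invSet A (dedekindDifferent k A) ⊆ complementaryModule k A := by
  intro f hf
  have h1 := one_mem_closure_DW hA hInv
  have key : f * 1 ∈ AddSubgroup.closure (complementaryModule k A) := by
    refine mul_mem_closure ?_ h1
    rintro _ ⟨d, hd, w, hw, rfl⟩
    have hfd : f * d ∈ A := hf d hd
    refine AddSubgroup.subset_closure ?_
    show f * (d * w) ∈ complementaryModule k A
    rw [show f * (d * w) = (f * d) * w by ring]
    exact mul_mem_compMod hw hfd
  rw [mul_one] at key
  have hle : AddSubgroup.closure (complementaryModule k A) ≤ compModAdd k A :=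
    (AddSubgroup.closure_le _).2 le_rfl
  exact hle key

/-- Over the maximal order, `1 ∈ W·𝒟` (Dedekind domain invertibility). -/
theorem one_mem_closure_WD' :
    (1 : L) ∈ AddSubgroup.closure
      {x : L | ∃ w ∈ complementaryModule k (integralClosure ℤ L).toSubring,
        ∃ e ∈ dedekindDifferent k (integralClosure ℤ L).toSubring, x = w * e} := by
  haveI : CharZero L := charZero_of_injective_algebraMap (algebraMap k L).injective
  haveI : IsScalarTower ℚ k L := IsScalarTower.of_algebraMap_eq' (Subsingleton.elim _ _)
  haveI : FiniteDimensional ℚ L := Module.Finite.trans k L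
  haveI : IsFractionRing ↥(integralClosure ℤ L) L :=
    integralClosure.isFractionRing_of_finite_extension ℚ L
  haveI : IsDedekindDomain ↥(integralClosure ℤ L) := integralClosure.isDedekindDomain ℤ ℚ L
  set B := integralClosure ℤ L with hB
  -- the complementary module as a submodule
  let Wsub : Submodule ↥B L :=
    { carrier := complementaryModule k B.toSubring
      add_mem' := fun hx hy => (compModAdd k B.toSubring).add_mem hx hy
      zero_mem' := (compModAdd k B.toSubring).zero_mem
      smul_mem' := by
        intro c x hx
        have : (c : L) * x ∈ complementaryModule k B.toSubring := mul_mem_compMod hx c.2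
        simpa [Algebra.smul_def] using this }
  -- it is a fractional ideal, since it is contained in the dual of `1` over `ℤ`
  have hWle : Wsub ≤ ((FractionalIdeal.dual ℤ ℚ (1 : FractionalIdeal (↥B)⁰ L) : FractionalIdeal (↥B)⁰ L) : Submodule ↥B L) := by
    rw [FractionalIdeal.coe_dual_one]
    intro x hx
    rw [Submodule.mem_traceDual]
    intro a ha
    rw [Submodule.mem_one] at ha
    obtain ⟨b, rfl⟩ := ha
    have hbint : IsIntegral ℤ (algebraMap ↥B L b) := b.2
    have htr : IsIntegral ℤ (Algebra.trace k L (x * algebraMap ↥B L b)) := hx _ b.2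
    have h2 : IsIntegral ℤ (Algebra.trace ℚ k (Algebra.trace k L (x * algebraMap ↥B L b))) :=
      Algebra.isIntegral_trace htr
    rw [Algebra.trace_trace] at h2
    have := IsIntegrallyClosed.isIntegral_iff.mp h2
    simpa [Algebra.traceForm_apply] using this
  have hfrac : IsFractional (↥B)⁰ Wsub := FractionalIdeal.isFractional_of_le hWle
  let Wfi : FractionalIdeal (↥B)⁰ L := ⟨Wsub, hfrac⟩
  have h1W : (1 : L) ∈ complementaryModule k B.toSubring :=
    one_mem_compMod fun a ha => ha
  have hW0 : Wfi ≠ 0 := by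
    intro h
    have : (1 : L) ∈ Wfi := h1W
    rw [h] at this
    exact one_ne_zero ((FractionalIdeal.mem_zero_iff _).mp this)
  have hmul : Wfi * Wfi⁻¹ = 1 := mul_inv_cancel₀ hW0
  have hc : (1 : L) ∈
      (Wfi : Submodule ↥B L) * ((Wfi⁻¹ : FractionalIdeal (↥B)⁰ L) : Submodule ↥B L) := by
    rw [← FractionalIdeal.coe_mul, hmul]
    exact FractionalIdeal.mem_coe.mpr (FractionalIdeal.one_mem_one _)
  refine Submodule.mul_induction_on hc ?_ ?_
  · intro m hm n hn
    refine AddSubgroup.subset_closure ⟨m, hm, n, ?_, rfl⟩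
    intro s hs
    have hn' : n ∈ Wfi⁻¹ := FractionalIdeal.mem_coe.mp hn
    have h1 := (FractionalIdeal.mem_inv_iff hW0).mp hn' s hs
    obtain ⟨b, hb⟩ := (FractionalIdeal.mem_one_iff _).mp h1
    have : (b : L) = n * s := hb
    rw [← this]
    exact b.2
  · intro x y hx hy
    exact AddSubgroup.add_mem _ hx hy

end Statement8

end KeyFacts

open Statement8 in
/-- Let `k` be a number field with ring of integers `R`, let `A` be an
`R`-order of a number field `L ⊇ k`, and let `A'` be the integral closure of `A` in `L` (the
ring of integers of `L`).  If the Dedekind different `𝒟_{A/R}` is an invertible ideal of `A`,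
then `𝒟_{A/R}·A' = 𝒞_A·𝒟_{A'/R}`, where `𝒞_A` is the conductor of `A` and `𝒟_{A'/R}` is the
different ideal of `A'` over `R`. -/
theorem different_mul_integralClosure_eq_conductor_mul_different
    (k L : Type*) [Field k] [NumberField k] [Field L] [Algebra k L] [FiniteDimensional k L]
    (A : Subring L) (hA : IsOrder k A)
    (hInv : IsInvertibleIdeal A (dedekindDifferent k A)) :
    AddSubgroup.closure
        {x : L | ∃ d ∈ dedekindDifferent k A, ∃ b ∈ integralClosure ℤ L, x = d * b} =
      AddSubgroup.closure
        {x : L | ∃ c ∈ conductorSet (integralClosure ℤ L).toSubring A,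
          ∃ e ∈ dedekindDifferent k (integralClosure ℤ L).toSubring, x = c * e} := by
  have hAle : A ≤ (integralClosure ℤ L).toSubring := order_le_integralClosure hA
  apply le_antisymm
  · refine (AddSubgroup.closure_le _).2 ?_
    rintro _ ⟨d, hd, b, hb, rfl⟩
    have h1 := one_mem_closure_WD' (k := k) (L := L)
    have key : d * b * (1 : L) ∈ AddSubgroup.closure
        {x : L | ∃ c ∈ conductorSet (integralClosure ℤ L).toSubring A,
          ∃ e ∈ dedekindDifferent k (integralClosure ℤ L).toSubring, x = c * e} := by
      refine mul_mem_closure ?_ h1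
      rintro _ ⟨w, hw, e, he, rfl⟩
      have hbw : b * w ∈ complementaryModule k (integralClosure ℤ L).toSubring :=
        mul_mem_compMod hw hb
      have hbwA : b * w ∈ complementaryModule k A := compMod_anti hAle hbw
      have hcmem : d * (b * w) ∈ conductorSet (integralClosure ℤ L).toSubring A := by
        constructor
        · exact hAle (hd _ hbwA)
        · intro y hy
          have hbyw : (b * y) * w ∈ complementaryModule k (integralClosure ℤ L).toSubring :=
            mul_mem_compMod hw ((integralClosure ℤ L).toSubring.mul_mem hb hy)
          have : d * ((b * y) * w) ∈ A := hd _ (compMod_anti hAle hbyw)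
          rwa [show d * (b * y * w) = d * (b * w) * y by ring] at this
      exact AddSubgroup.subset_closure ⟨d * (b * w), hcmem, e, he, by ring⟩
    simpa using key
  · refine (AddSubgroup.closure_le _).2 ?_
    rintro _ ⟨c, hc, e, he, rfl⟩
    have honeInv : (1 : L) ∈ AddSubgroup.closure
        {x : L | ∃ d ∈ dedekindDifferent k A, ∃ f ∈ invSet A (dedekindDifferent k A), x = d * f} := by
      rw [hInv]; exact A.one_mem
    have key : c * e * (1 : L) ∈ AddSubgroup.closure
        {x : L | ∃ d ∈ dedekindDifferent k A, ∃ b ∈ integralClosure ℤ L, x = d * b} := by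
      refine mul_mem_closure ?_ honeInv
      rintro _ ⟨d, hd, f, hf, rfl⟩
      have hfW : f ∈ complementaryModule k A := invSet_different_subset_compMod hA hInv hf
      have hcf : c * f ∈ complementaryModule k (integralClosure ℤ L).toSubring :=
        conductor_mul_compMod hc hfW
      have hecf : e * (c * f) ∈ (integralClosure ℤ L).toSubring := he (c * f) hcf
      exact AddSubgroup.subset_closure ⟨d, hd, e * (c * f), hecf, by ring⟩
    simpa using key

end
end

section
/- Let k be a number field contained in an algebraic closure k̄, let L_1 and L_2 be number fields with k ⊆ L_1, L_2 ⊆ k̄, and let L_3 = L_1·L_2 be their compositum. Let α be an algebraic integer in L_2 with k(α) = L_2 (so L_1(α) = L_3). Let f be the minimal polynomial of α over k and let g be the minimal polynomial of α over L_1. Then g'(α) divides f'(α) in the ring of integers of L_3; that is, there exists β in the ring of integers of L_3 with f'(α) = g'(α)·β. -/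
set_option synthInstance.maxHeartbeats 400000
set_option maxHeartbeats 800000


open NumberField IntermediateField Polynomial

noncomputable section

/-- Let `k` be a number field with algebraic closure `k̄ = K`, let `L₁`, `L₂`
be number fields with `k ⊆ L₁, L₂ ⊆ K`, and let `L₃ = L₁·L₂` be their compositum.  Let `α` be
an algebraic integer in `L₂` with `k(α) = L₂` (so `L₁(α) = L₃`).  Let `f` be the minimal
polynomial of `α` over `k` and `g` the minimal polynomial of `α` over `L₁`.  Then `g'(α)`
divides `f'(α)` in the ring of integers of `L₃`: there is an algebraic integer `β ∈ L₃` with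
`f'(α) = g'(α)·β`. -/
theorem derivative_minpoly_dvd
    (k K : Type*) [Field k] [NumberField k] [Field K] [Algebra k K] [IsAlgClosure k K]
    (L₁ L₂ : IntermediateField k K) [FiniteDimensional k L₁] [FiniteDimensional k L₂]
    (α : K) (hαL₂ : α ∈ L₂) (hαint : IsIntegral ℤ α)
    (hαgen : IntermediateField.adjoin k {α} = L₂) :
    ∃ β : K, β ∈ L₁ ⊔ L₂ ∧ IsIntegral ℤ β ∧
      aeval α (derivative (minpoly k α)) = aeval α (derivative (minpoly L₁ α)) * β := by
  set f := minpoly k α with hf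
  set g := minpoly L₁ α with hg
  -- g divides the image of f in L₁[X]
  obtain ⟨h, hgh⟩ : g ∣ f.map (algebraMap k L₁) :=
    minpoly.dvd_map_of_isScalarTower k L₁ α
  have hαk : IsIntegral k α := hαint.tower_top
  have hfmonic : f.Monic := minpoly.monic hαk
  have hgmonic : g.Monic := minpoly.monic hαk.tower_top
  have hhmonic : h.Monic := by
    apply hgmonic.of_mul_monic_left
    rw [← hgh]
    exact hfmonic.map _
  refine ⟨aeval α h, ?_, ?_, ?_⟩
  · -- membership in the compositum
    rw [aeval_def, ← eval_map, Polynomial.eval_eq_sum_range]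
    refine sum_mem fun i _ => mul_mem ?_ (pow_mem ((le_sup_right : L₂ ≤ L₁ ⊔ L₂) hαL₂) i)
    rw [Polynomial.coeff_map]
    exact (le_sup_left : L₁ ≤ L₁ ⊔ L₂) (h.coeff i).2
  · -- integrality
    have hdvd : (h.map (algebraMap (↥L₁) K)) ∣ (minpoly ℤ α).map (algebraMap ℤ K) := by
      have h1 : h ∣ f.map (algebraMap k L₁) := Dvd.intro_left g hgh.symm
      have h2 : h.map (algebraMap (↥L₁) K) ∣ f.map (algebraMap k K) := by
        have := Polynomial.map_dvd (algebraMap (↥L₁) K) h1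
        rwa [Polynomial.map_map, ← IsScalarTower.algebraMap_eq] at this
      have h3 : f ∣ (minpoly ℤ α).map (algebraMap ℤ k) :=
        minpoly.dvd_map_of_isScalarTower ℤ k α
      have h4 : f.map (algebraMap k K) ∣ (minpoly ℤ α).map (algebraMap ℤ K) := by
        have := Polynomial.map_dvd (algebraMap k K) h3
        rwa [Polynomial.map_map, ← IsScalarTower.algebraMap_eq] at this
      exact h2.trans h4
    have hlifts : (h.map (algebraMap (↥L₁) K)) ∈
        Polynomial.lifts (algebraMap (integralClosure ℤ K) K) :=
      integralClosure.mem_lifts_of_monic_of_dvd_map K (minpoly.monic hαint)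
        (hhmonic.map _) hdvd
    rw [Polynomial.lifts_iff_coeff_lifts] at hlifts
    have hcoeff : ∀ i, (h.map (algebraMap (↥L₁) K)).coeff i ∈ integralClosure ℤ K := by
      intro i
      obtain ⟨c, hc⟩ := hlifts i
      exact hc ▸ c.2
    have : aeval α h ∈ integralClosure ℤ K := by
      rw [aeval_def, ← eval_map, Polynomial.eval_eq_sum_range]
      exact Subalgebra.sum_mem _ fun i _ =>
        Subalgebra.mul_mem _ (hcoeff i) (Subalgebra.pow_mem _ hαint i)
    exact this
  · -- the divisibility identity
    have e1 : aeval α (derivative f) = aeval α (derivative (f.map (algebraMap k L₁))) := by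
      rw [Polynomial.derivative_map, aeval_map_algebraMap]
    rw [e1, hgh, derivative_mul, map_add, map_mul, map_mul, hg, minpoly.aeval, zero_mul,
      add_zero]
end
end
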